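/- arXiv:2102.05762 — 2 statements merged into one kernel-verified Lean document; each statement's English description precedes it below -/
import Mathlib

section
/- Let Ω be a finite nonempty set, P : Ω → [0,1] a probability mass function with Σ_ω P(ω) = 1, Z : Ω → ℝ, and α ∈ (0,1]. Then CVaR_α(Z) = min over all ξ : Ω → ℝ with 0 ≤ ξ(ω) ≤ 1/α for all ω and Σ_ω ξ(ω)P(ω) = 1, of the ξ-weighted expectation Σ_ω ξ(ω)Z(ω)P(ω); moreover the minimum is attained. -/
/-- The cumulative distribution function `F(z) = Σ_{ω : Z ω ≤ z} P ω` on a finite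
probability space. -/
noncomputable def finCdf {Ω : Type*} [Fintype Ω] (P : Ω → ℝ) (Z : Ω → ℝ) (z : ℝ) : ℝ :=
  ∑ ω, if Z ω ≤ z then P ω else 0

/-- The value at risk `VaR_γ(Z) = inf {z | F z ≥ γ}`. -/
noncomputable def finVaR {Ω : Type*} [Fintype Ω] (P : Ω → ℝ) (Z : Ω → ℝ) (γ : ℝ) : ℝ :=
  sInf {z : ℝ | γ ≤ finCdf P Z z}

/-- The conditional value at risk `CVaR_α(Z) = (1/α) ∫_0^α VaR_γ(Z) dγ`. -/
noncomputable def finCVaR {Ω : Type*} [Fintype Ω] (P : Ω → ℝ) (Z : Ω → ℝ) (α : ℝ) : ℝ :=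
  (1 / α) * ∫ γ in (0 : ℝ)..α, finVaR P Z γ

/-!
On `(0, 1]` the quantile function `γ ↦ VaR_γ(Z)` pushes Lebesgue measure forward to the law of
`Z`, because `VaR_γ(Z) ≤ s ↔ γ ≤ F s`. Integrating `min (· - c) 0` against both, with
`c = VaR_α(Z)`, gives `∫₀^α VaR_γ(Z) dγ = α c + E[min (Z - c) 0]`, i.e.
`CVaR_α(Z) = c + α⁻¹ E[min (Z - c) 0]`.

For a density `ξ` in the risk envelope, `0 ≤ ξ ≤ 1/α` gives `ξ (Z - c) ≥ α⁻¹ min (Z - c) 0`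
pointwise, and `E[ξ Z] = c + E[ξ (Z - c)]`. Equality holds for `ξ = 1/α` on `{Z < c}`, `ξ = 0`
on `{Z > c}`, and the missing mass `α - P(Z < c)` spread over the atom `{Z = c}`; this is possible
since `P(Z < c) ≤ α ≤ P(Z ≤ c)`.
-/

open MeasureTheory Set

section
variable {Ω : Type*} [Fintype Ω] {P : Ω → ℝ} (Z : Ω → ℝ)

lemma finCdf_mono (hP : ∀ ω, 0 ≤ P ω) : Monotone (finCdf P Z) := fun a b hab =>
  Finset.sum_le_sum fun ω _ => by
    split_ifs with ha hb
    exacts [le_rfl, absurd (ha.trans hab) hb, hP ω, le_rfl]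

lemma finCdf_le_sum (hP : ∀ ω, 0 ≤ P ω) (z : ℝ) : finCdf P Z z ≤ ∑ ω, P ω :=
  Finset.sum_le_sum fun ω _ => by split_ifs <;> simp [hP ω]

lemma finCdf_eq_sum_of_forall_le {z : ℝ} (hz : ∀ ω, Z ω ≤ z) : finCdf P Z z = ∑ ω, P ω :=
  Finset.sum_congr rfl fun ω _ => if_pos (hz ω)

lemma finCdf_eq_zero_of_forall_lt {z : ℝ} (hz : ∀ ω, z < Z ω) : finCdf P Z z = 0 :=
  Finset.sum_eq_zero fun ω _ => if_neg (hz ω).not_ge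

lemma upperSemicontinuous_finCdf (hP : ∀ ω, 0 ≤ P ω) : UpperSemicontinuous (finCdf P Z) := by
  have : finCdf P Z = fun z => ∑ ω, (Ici (Z ω)).indicator (fun _ => P ω) z := by
    ext z; simp [finCdf, indicator_apply]
  rw [this]
  exact upperSemicontinuous_sum fun ω _ => isClosed_Ici.upperSemicontinuous_indicator (hP ω)

variable {Z} (hP : ∀ ω, 0 ≤ P ω) (hPsum : ∑ ω, P ω = 1)
include hP hPsum

theorem finVaR_le_iff {γ : ℝ} (hγ : γ ∈ Ioc 0 1) (s : ℝ) :
    finVaR P Z γ ≤ s ↔ γ ≤ finCdf P Z s := by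
  obtain ⟨M, hM⟩ := (finite_range Z).bddAbove
  obtain ⟨m, hm⟩ := (finite_range Z).bddBelow
  have hne : {z | γ ≤ finCdf P Z z}.Nonempty :=
    ⟨M, by simpa [finCdf_eq_sum_of_forall_le Z fun ω => hM (mem_range_self ω), hPsum] using hγ.2⟩
  have hbdd : BddBelow {z | γ ≤ finCdf P Z z} := ⟨m, fun z hz => not_lt.1 fun hzm => by
    have := finCdf_eq_zero_of_forall_lt Z (P := P) fun ω => hzm.trans_le (hm (mem_range_self ω))
    exact (hγ.1.trans_le (this ▸ hz)).false⟩
  have hmem : γ ≤ finCdf P Z (finVaR P Z γ) :=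
    ((upperSemicontinuous_finCdf Z hP).isClosed_preimage γ).csInf_mem hne hbdd
  exact ⟨fun h => hmem.trans (finCdf_mono Z hP h), fun h => csInf_le hbdd h⟩

lemma le_finCdf_finVaR {γ : ℝ} (hγ : γ ∈ Ioc 0 1) : γ ≤ finCdf P Z (finVaR P Z γ) :=
  (finVaR_le_iff hP hPsum hγ _).1 le_rfl

lemma monotoneOn_finVaR : MonotoneOn (finVaR P Z) (Ioc 0 1) := fun _ hγ _ hγ' h =>
  (finVaR_le_iff hP hPsum hγ _).2 (h.trans (le_finCdf_finVaR hP hPsum hγ'))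

end

noncomputable def finLaw {Ω : Type*} [Fintype Ω] (P : Ω → ℝ) (Z : Ω → ℝ) : Measure ℝ :=
  ∑ ω, ENNReal.ofReal (P ω) • Measure.dirac (Z ω)

section
variable {Ω : Type*} [Fintype Ω] {P : Ω → ℝ} {Z : Ω → ℝ}

lemma finLaw_apply (hP : ∀ ω, 0 ≤ P ω) {s : Set ℝ} [DecidablePred (· ∈ s)]
    (hs : MeasurableSet s) :
    finLaw P Z s = ENNReal.ofReal (∑ ω, if Z ω ∈ s then P ω else 0) := by
  rw [ENNReal.ofReal_sum_of_nonneg fun ω _ => by split_ifs <;> simp [hP ω]]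
  simp [finLaw, Measure.dirac_apply' _ hs, indicator_apply, apply_ite ENNReal.ofReal]

lemma integrable_finLaw (f : ℝ → ℝ) : Integrable f (finLaw P Z) :=
  integrable_finsetSum_measure.2 fun _ _ =>
    (integrable_dirac (by simp)).smul_measure ENNReal.ofReal_ne_top

lemma integral_finLaw (hP : ∀ ω, 0 ≤ P ω) (f : ℝ → ℝ) :
    ∫ x, f x ∂finLaw P Z = ∑ ω, P ω * f (Z ω) := by
  rw [finLaw, integral_finsetSum_measure fun _ _ =>
    (integrable_dirac (by simp)).smul_measure ENNReal.ofReal_ne_top]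
  simp [integral_smul_measure, ENNReal.toReal_ofReal (hP _)]

variable (hP : ∀ ω, 0 ≤ P ω) (hPsum : ∑ ω, P ω = 1)
include hP hPsum

lemma aemeasurable_finVaR : AEMeasurable (finVaR P Z) (volume.restrict (Ioc 0 1)) :=
  aemeasurable_restrict_of_monotoneOn measurableSet_Ioc (monotoneOn_finVaR hP hPsum)

theorem map_finVaR_restrict_Ioc : (volume.restrict (Ioc 0 1)).map (finVaR P Z) = finLaw P Z := by
  refine Measure.ext_of_Iic _ _ fun s => ?_
  have hpre : finVaR P Z ⁻¹' Iic s ∩ Ioc 0 1 = Ioc 0 (finCdf P Z s) := by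
    ext γ
    simp only [mem_inter_iff, mem_preimage, mem_Iic, mem_Ioc]
    constructor
    · rintro ⟨h, hγ⟩
      exact ⟨hγ.1, (finVaR_le_iff hP hPsum hγ s).1 h⟩
    · rintro ⟨hγ0, hγ⟩
      have hγ1 : γ ≤ 1 := hγ.trans (hPsum ▸ finCdf_le_sum Z hP s)
      exact ⟨(finVaR_le_iff hP hPsum ⟨hγ0, hγ1⟩ s).2 hγ, hγ0, hγ1⟩
  rw [Measure.map_apply_of_aemeasurable (aemeasurable_finVaR hP hPsum) measurableSet_Iic,
    Measure.restrict_apply' measurableSet_Ioc, hpre, Real.volume_Ioc, sub_zero,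
    finLaw_apply hP measurableSet_Iic]
  rfl

lemma integrableOn_comp_finVaR (f : ℝ → ℝ) :
    IntegrableOn (fun γ => f (finVaR P Z γ)) (Ioc 0 1) := by
  have := integrable_finLaw (P := P) (Z := Z) f
  rw [← map_finVaR_restrict_Ioc hP hPsum] at this
  exact (integrable_map_measure this.aestronglyMeasurable (aemeasurable_finVaR hP hPsum)).1 this

theorem setIntegral_comp_finVaR (f : ℝ → ℝ) :
    ∫ γ in Ioc 0 1, f (finVaR P Z γ) = ∑ ω, P ω * f (Z ω) := by
  have hf : AEStronglyMeasurable f ((volume.restrict (Ioc 0 1)).map (finVaR P Z)) := by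
    rw [map_finVaR_restrict_Ioc hP hPsum]
    exact (integrable_finLaw f).aestronglyMeasurable
  rw [← integral_map (aemeasurable_finVaR hP hPsum) hf, map_finVaR_restrict_Ioc hP hPsum,
    integral_finLaw hP]

lemma sum_ite_lt_finVaR_le {α : ℝ} (hα : α ∈ Ioc 0 1) :
    ∑ ω, (if Z ω < finVaR P Z α then P ω else 0) ≤ α := by
  have hsub : finVaR P Z ⁻¹' Iio (finVaR P Z α) ∩ Ioc 0 1 ⊆ Ioc 0 α := fun γ ⟨h, hγ⟩ =>
    ⟨hγ.1, not_lt.1 fun hαγ => (monotoneOn_finVaR hP hPsum hα hγ hαγ.le).not_gt h⟩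
  have := measure_mono (μ := volume) hsub
  rwa [← Measure.restrict_apply' measurableSet_Ioc,
    ← Measure.map_apply_of_aemeasurable (aemeasurable_finVaR hP hPsum) measurableSet_Iio,
    map_finVaR_restrict_Ioc hP hPsum, finLaw_apply hP measurableSet_Iio, Real.volume_Ioc,
    sub_zero, ENNReal.ofReal_le_ofReal_iff hα.1.le] at this

theorem intervalIntegral_finVaR {α : ℝ} (hα : α ∈ Ioc 0 1) :
    ∫ γ in (0 : ℝ)..α, finVaR P Z γ
      = α * finVaR P Z α + ∑ ω, P ω * min (Z ω - finVaR P Z α) 0 := by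
  set c := finVaR P Z α
  have hsub : Ioc (0 : ℝ) α ⊆ Ioc 0 1 := Ioc_subset_Ioc_right hα.2
  have hind : EqOn (fun γ => min (finVaR P Z γ - c) 0)
      ((Ioc 0 α).indicator fun γ => finVaR P Z γ - c) (Ioc 0 1) := by
    intro γ hγ
    dsimp only
    by_cases h : γ ≤ α
    · rw [indicator_of_mem (show γ ∈ Ioc 0 α from ⟨hγ.1, h⟩),
        min_eq_left (sub_nonpos.2 (monotoneOn_finVaR hP hPsum hγ hα h))]
    · rw [indicator_of_notMem fun h' => h h'.2,
        min_eq_right (sub_nonneg.2 (monotoneOn_finVaR hP hPsum hα hγ (le_of_not_ge h)))]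
  have hint : IntegrableOn (finVaR P Z) (Ioc 0 α) :=
    (integrableOn_comp_finVaR hP hPsum fun x => x).mono_set hsub
  have := setIntegral_comp_finVaR (Z := Z) hP hPsum fun x => min (x - c) 0
  rw [setIntegral_congr_fun measurableSet_Ioc hind, setIntegral_indicator measurableSet_Ioc,
    inter_eq_right.2 hsub, integral_sub hint (integrableOn_const (by simp)), setIntegral_const,
    Real.volume_real_Ioc_of_le hα.1.le, smul_eq_mul] at this
  rw [intervalIntegral.integral_of_le hα.1.le]
  linarith

end

def riskEnvelope {Ω : Type*} [Fintype Ω] (P : Ω → ℝ) (α : ℝ) : Set (Ω → ℝ) :=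
  {ξ | (∀ ω, 0 ≤ ξ ω ∧ ξ ω ≤ 1 / α) ∧ ∑ ω, ξ ω * P ω = 1}

lemma mul_min_le_mul {a ξ : ℝ} (h0 : 0 ≤ ξ) (h1 : ξ ≤ a) (x : ℝ) : a * min x 0 ≤ ξ * x := by
  rcases le_total x 0 with hx | hx
  · rw [min_eq_left hx]
    exact mul_le_mul_of_nonpos_right h1 hx
  · rw [min_eq_right hx, mul_zero]
    exact mul_nonneg h0 hx

section
variable {Ω : Type*} [Fintype Ω] {P Z : Ω → ℝ} {α : ℝ}

lemma sum_mul_mul_eq_add_of_mem_riskEnvelope {ξ : Ω → ℝ} (hξ : ξ ∈ riskEnvelope P α) (c : ℝ) :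
    ∑ ω, ξ ω * Z ω * P ω = c + ∑ ω, ξ ω * (Z ω - c) * P ω := by
  have : ∑ ω, ξ ω * Z ω * P ω = c * ∑ ω, ξ ω * P ω + ∑ ω, ξ ω * (Z ω - c) * P ω := by
    rw [Finset.mul_sum, ← Finset.sum_add_distrib]
    exact Finset.sum_congr rfl fun ω _ => by ring
  rw [this, hξ.2, mul_one]

variable (hP : ∀ ω, 0 ≤ P ω)
include hP

lemma add_sum_min_le_of_mem_riskEnvelope {ξ : Ω → ℝ} (hξ : ξ ∈ riskEnvelope P α) (c : ℝ) :
    c + 1 / α * ∑ ω, P ω * min (Z ω - c) 0 ≤ ∑ ω, ξ ω * Z ω * P ω := by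
  rw [sum_mul_mul_eq_add_of_mem_riskEnvelope hξ c, Finset.mul_sum]
  refine add_le_add_right (Finset.sum_le_sum fun ω _ => ?_) c
  calc 1 / α * (P ω * min (Z ω - c) 0) = P ω * (1 / α * min (Z ω - c) 0) := by ring
    _ ≤ P ω * (ξ ω * (Z ω - c)) :=
      mul_le_mul_of_nonneg_left (mul_min_le_mul (hξ.1 ω).1 (hξ.1 ω).2 _) (hP ω)
    _ = ξ ω * (Z ω - c) * P ω := by ring

lemma exists_mem_riskEnvelope_sum_eq {c : ℝ} (hα : 0 < α)
    (hlt : ∑ ω, (if Z ω < c then P ω else 0) ≤ α) (hle : α ≤ finCdf P Z c) :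
    ∃ ξ ∈ riskEnvelope P α, ∑ ω, ξ ω * Z ω * P ω = c + 1 / α * ∑ ω, P ω * min (Z ω - c) 0 := by
  set pm := ∑ ω, if Z ω < c then P ω else 0
  set p0 := ∑ ω, if Z ω = c then P ω else 0
  have hsplit : finCdf P Z c = pm + p0 := by
    rw [finCdf, ← Finset.sum_add_distrib]
    refine Finset.sum_congr rfl fun ω _ => ?_
    rcases lt_trichotomy (Z ω) c with h | h | h
    · simp [h.le, h, h.ne]
    · simp [h]
    · simp [h.not_ge, h.not_gt, h.ne']
  have hp0 : 0 ≤ p0 := Finset.sum_nonneg fun ω _ => by split_ifs <;> simp [hP ω]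
  -- if `p0 = 0` then `pm = α`, and `t = 0` (division by zero) still fits
  set t := (α - pm) / (α * p0)
  have ht0 : 0 ≤ t := div_nonneg (by linarith) (by positivity)
  have ht1 : t ≤ 1 / α := by
    rcases hp0.eq_or_lt with h | h
    · simp [t, ← h]
      positivity
    · rw [div_le_div_iff₀ (by positivity) hα]
      nlinarith
  have htp0 : t * p0 = (α - pm) / α := by
    rcases hp0.eq_or_lt with h | h
    · have : α - pm = 0 := by linarith
      simp [← h, this]
    · rw [div_mul_eq_mul_div, mul_comm α p0, ← div_div, mul_div_cancel_right₀ _ h.ne']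
  let ξ : Ω → ℝ := fun ω => if Z ω < c then 1 / α else if Z ω = c then t else 0
  have hξ : ξ ∈ riskEnvelope P α := by
    refine ⟨fun ω => ?_, ?_⟩
    · dsimp only [ξ]
      split_ifs
      exacts [⟨by positivity, le_rfl⟩, ⟨ht0, ht1⟩, ⟨le_rfl, by positivity⟩]
    · have hterm : ∀ ω, ξ ω * P ω
          = 1 / α * (if Z ω < c then P ω else 0) + t * (if Z ω = c then P ω else 0) := by
        intro ω
        rcases lt_trichotomy (Z ω) c with h | h | h
        · simp [ξ, h, h.ne]
        · simp [ξ, h]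
        · simp [ξ, h.not_gt, h.ne']
      rw [Finset.sum_congr rfl fun ω _ => hterm ω, Finset.sum_add_distrib, ← Finset.mul_sum,
        ← Finset.mul_sum, htp0]
      field_simp
      ring
  refine ⟨ξ, hξ, ?_⟩
  rw [sum_mul_mul_eq_add_of_mem_riskEnvelope hξ c, Finset.mul_sum]
  congr 1
  refine Finset.sum_congr rfl fun ω _ => ?_
  rcases lt_trichotomy (Z ω) c with h | h | h
  · simp [ξ, h, min_eq_left (sub_nonpos.2 h.le)]
    ring
  · simp [ξ, h]
  · simp [ξ, h.not_gt, h.ne', min_eq_right (sub_nonneg.2 h.le)]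

end

theorem cvar_dual_representation_finite_general
    {Ω : Type*} [Fintype Ω]
    (P : Ω → ℝ) (hP : ∀ ω, P ω ∈ Set.Icc (0 : ℝ) 1) (hPsum : ∑ ω, P ω = 1)
    (Z : Ω → ℝ) (α : ℝ) (hα : α ∈ Set.Ioc (0 : ℝ) 1) :
    IsLeast
      { v : ℝ | ∃ ξ : Ω → ℝ,
          (∀ ω, 0 ≤ ξ ω ∧ ξ ω ≤ 1 / α) ∧
          (∑ ω, ξ ω * P ω = 1) ∧
          v = ∑ ω, ξ ω * Z ω * P ω }
      (finCVaR P Z α) := by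
  have hP0 : ∀ ω, 0 ≤ P ω := fun ω => (hP ω).1
  have hCVaR : finCVaR P Z α
      = finVaR P Z α + 1 / α * ∑ ω, P ω * min (Z ω - finVaR P Z α) 0 := by
    rw [finCVaR, intervalIntegral_finVaR hP0 hPsum hα, mul_add, ← mul_assoc,
      one_div_mul_cancel hα.1.ne', one_mul]
  obtain ⟨ξ, hξ, hξZ⟩ := exists_mem_riskEnvelope_sum_eq hP0 hα.1
    (sum_ite_lt_finVaR_le hP0 hPsum hα) (le_finCdf_finVaR hP0 hPsum hα)
  rw [hCVaR]
  exact ⟨⟨ξ, hξ.1, hξ.2, hξZ.symm⟩, fun _ ⟨ξ', hbound, hsum, hv⟩ =>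
    hv ▸ add_sum_min_le_of_mem_riskEnvelope hP0 ⟨hbound, hsum⟩ _⟩

/-- **Dual (risk-envelope) representation of CVaR on a finite probability space.**
Let `Ω` be a finite nonempty set, `P : Ω → [0,1]` a probability mass function with
`Σ_ω P ω = 1`, `Z : Ω → ℝ`, and `α ∈ (0,1]`.  Then `CVaR_α(Z)` is the minimum — and the
minimum is attained — over all densities `ξ : Ω → ℝ` with `0 ≤ ξ ω ≤ 1/α` and
`Σ_ω ξ ω * P ω = 1`, of the `ξ`-weighted expectation `Σ_ω ξ ω * Z ω * P ω`. -/
theorem cvar_dual_representation_finite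
    {Ω : Type*} [Fintype Ω] [Nonempty Ω]
    (P : Ω → ℝ) (hP : ∀ ω, P ω ∈ Set.Icc (0 : ℝ) 1) (hPsum : ∑ ω, P ω = 1)
    (Z : Ω → ℝ) (α : ℝ) (hα : α ∈ Set.Ioc (0 : ℝ) 1) :
    IsLeast
      { v : ℝ | ∃ ξ : Ω → ℝ,
          (∀ ω, 0 ≤ ξ ω ∧ ξ ω ≤ 1 / α) ∧
          (∑ ω, ξ ω * P ω = 1) ∧
          v = ∑ ω, ξ ω * Z ω * P ω }
      (finCVaR P Z α) :=
  cvar_dual_representation_finite_general P hP hPsum Z α hα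
end

section
/- Let Z be an integrable real-valued random variable whose cumulative distribution function F is continuous, and let α ∈ (0,1). Then P(Z ≤ VaR_α(Z)) = α and CVaR_α(Z) = E[Z · 1{Z ≤ VaR_α(Z)}]/α, i.e. CVaR_α(Z) equals the conditional expectation E[Z | Z ≤ VaR_α(Z)]. -/
open MeasureTheory

variable {Ω : Type*} [MeasurableSpace Ω]

/-- The cumulative distribution function `F(z) = P(Z ≤ z)` of a real random variable. -/
noncomputable def cdf (μ : Measure Ω) (Z : Ω → ℝ) (z : ℝ) : ℝ :=
  (μ {ω | Z ω ≤ z}).toReal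

/-- The value at risk `VaR_γ(Z) = inf {z | F z ≥ γ}` at confidence level `γ`. -/
noncomputable def vaR (μ : Measure Ω) (Z : Ω → ℝ) (γ : ℝ) : ℝ :=
  sInf {z : ℝ | γ ≤ cdf μ Z z}

/-- The conditional value at risk `CVaR_α(Z) = (1/α) ∫_0^α VaR_γ(Z) dγ`. -/
noncomputable def cvar (μ : Measure Ω) (Z : Ω → ℝ) (α : ℝ) : ℝ :=
  (1 / α) * ∫ γ in (0 : ℝ)..α, vaR μ Z γ

/-!
For a continuous cdf `F`, the quantile function `q γ = inf {z | γ ≤ F z}` is a Galois inverse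
of `F` on `(0,1)`: `q γ ≤ z ↔ γ ≤ F z`, and `F (q γ) = γ`. Hence, if `U` is uniform on
`(0, α]`, then `P(q U ≤ z) = min (F z) α / α`, i.e. `q U` has the law of `Z` conditioned on
`Z ≤ q α = VaR_α(Z)`. Integrating `x ↦ x` against both laws gives
`∫_0^α VaR_γ(Z) dγ = E[Z · 1{Z ≤ VaR_α(Z)}]`.
-/

open Set Filter Topology

noncomputable def quantile (F : ℝ → ℝ) (γ : ℝ) : ℝ :=
  sInf {z | γ ≤ F z}

section Quantile

variable (ν : Measure ℝ) {γ : ℝ}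

lemma bddBelow_setOf_le_cdf (hγ : 0 < γ) :
    BddBelow {z | γ ≤ ProbabilityTheory.cdf ν z} := by
  obtain ⟨a, ha⟩ := eventually_atBot.1
    ((ProbabilityTheory.tendsto_cdf_atBot ν).eventually (eventually_lt_nhds hγ))
  exact ⟨a, fun z hz => le_of_not_ge fun hza => (ha z hza).not_ge hz⟩

lemma nonempty_setOf_le_cdf (hγ : γ < 1) : {z | γ ≤ ProbabilityTheory.cdf ν z}.Nonempty :=
  let ⟨z, hz⟩ :=
    ((ProbabilityTheory.tendsto_cdf_atTop ν).eventually (eventually_gt_nhds hγ)).exists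
  ⟨z, hz.le⟩

lemma quantile_cdf_le_iff (hc : Continuous (ProbabilityTheory.cdf ν)) (hγ : γ ∈ Ioo 0 1)
    {z : ℝ} : quantile (ProbabilityTheory.cdf ν) γ ≤ z ↔ γ ≤ ProbabilityTheory.cdf ν z := by
  have hbdd := bddBelow_setOf_le_cdf ν hγ.1
  have hmem : γ ≤ ProbabilityTheory.cdf ν (quantile (ProbabilityTheory.cdf ν) γ) :=
    (isClosed_le continuous_const hc).csInf_mem (nonempty_setOf_le_cdf ν hγ.2) hbdd
  exact ⟨fun h => hmem.trans (ProbabilityTheory.monotone_cdf ν h), fun h => csInf_le hbdd h⟩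

lemma cdf_quantile_cdf (hc : Continuous (ProbabilityTheory.cdf ν)) (hγ : γ ∈ Ioo 0 1) :
    ProbabilityTheory.cdf ν (quantile (ProbabilityTheory.cdf ν) γ) = γ := by
  obtain ⟨z, rfl⟩ : γ ∈ range (ProbabilityTheory.cdf ν) :=
    mem_range_of_exists_le_of_exists_ge hc
      (let ⟨z, hz⟩ :=
        ((ProbabilityTheory.tendsto_cdf_atBot ν).eventually (eventually_lt_nhds hγ.1)).exists
      ⟨z, hz.le⟩)
      (nonempty_setOf_le_cdf ν hγ.2)
  exact le_antisymm (ProbabilityTheory.monotone_cdf ν ((quantile_cdf_le_iff ν hc hγ).2 le_rfl))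
    ((quantile_cdf_le_iff ν hc hγ).1 le_rfl)

lemma monotoneOn_quantile_cdf (hc : Continuous (ProbabilityTheory.cdf ν)) :
    MonotoneOn (quantile (ProbabilityTheory.cdf ν)) (Ioo 0 1) :=
  fun _ hγ _ hγ' h =>
    (quantile_cdf_le_iff ν hc hγ).2 (h.trans ((quantile_cdf_le_iff ν hc hγ').1 le_rfl))

lemma aemeasurable_quantile_cdf (hc : Continuous (ProbabilityTheory.cdf ν)) {α : ℝ}
    (hα : α < 1) :
    AEMeasurable (quantile (ProbabilityTheory.cdf ν)) (volume.restrict (Ioc 0 α)) :=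
  aemeasurable_restrict_of_monotoneOn measurableSet_Ioc
    ((monotoneOn_quantile_cdf ν hc).mono (Ioc_subset_Ioo_right hα))

lemma map_quantile_cdf_restrict_Ioc [IsProbabilityMeasure ν]
    (hc : Continuous (ProbabilityTheory.cdf ν)) {α : ℝ} (hα : α ∈ Ioo 0 1) :
    (volume.restrict (Ioc 0 α)).map (quantile (ProbabilityTheory.cdf ν))
      = ν.restrict (Iic (quantile (ProbabilityTheory.cdf ν) α)) := by
  set F := ProbabilityTheory.cdf ν
  have hsub : Ioc 0 α ⊆ Ioo 0 1 := Ioc_subset_Ioo_right hα.2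
  refine Measure.ext_of_Iic _ _ fun z => ?_
  have hpre : quantile F ⁻¹' Iic z ∩ Ioc 0 α = Ioc 0 (min α (F z)) := by
    rw [← Ioc_inter_Iic, inter_comm]
    ext γ
    exact and_congr_right fun hγ => quantile_cdf_le_iff ν hc (hsub hγ)
  rw [Measure.map_apply_of_aemeasurable (aemeasurable_quantile_cdf ν hc hα.2)
      measurableSet_Iic,
    Measure.restrict_apply' measurableSet_Ioc, Measure.restrict_apply measurableSet_Iic, hpre,
    Real.volume_Ioc, sub_zero, Iic_inter_Iic, ← ProbabilityTheory.ofReal_cdf,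
    (ProbabilityTheory.monotone_cdf ν).map_min, cdf_quantile_cdf ν hc hα, min_comm]

lemma intervalIntegral_quantile_cdf [IsProbabilityMeasure ν]
    (hc : Continuous (ProbabilityTheory.cdf ν)) {α : ℝ} (hα : α ∈ Ioo 0 1) :
    ∫ γ in (0 : ℝ)..α, quantile (ProbabilityTheory.cdf ν) γ
      = ∫ x in Iic (quantile (ProbabilityTheory.cdf ν) α), x ∂ν := by
  rw [intervalIntegral.integral_of_le hα.1.le, ← map_quantile_cdf_restrict_Ioc ν hc hα]
  exact (integral_map (aemeasurable_quantile_cdf ν hc hα.2) aestronglyMeasurable_id).symm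

end Quantile

lemma cdf_eq_cdf_map (μ : Measure Ω) [IsProbabilityMeasure μ] {Z : Ω → ℝ} (hZ : Measurable Z) :
    cdf μ Z = ProbabilityTheory.cdf (μ.map Z) := by
  have := Measure.isProbabilityMeasure_map (μ := μ) hZ.aemeasurable
  ext z
  rw [ProbabilityTheory.cdf_eq_real, map_measureReal_apply hZ measurableSet_Iic]
  rfl

theorem cvar_eq_tail_expectation_general
    (μ : Measure Ω) [IsProbabilityMeasure μ]
    (Z : Ω → ℝ) (hZm : Measurable Z)
    (hFcont : Continuous (cdf μ Z))
    (α : ℝ) (hα : α ∈ Set.Ioo (0 : ℝ) 1) :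
    (μ {ω | Z ω ≤ vaR μ Z α}).toReal = α ∧
    cvar μ Z α = (∫ ω in {ω | Z ω ≤ vaR μ Z α}, Z ω ∂μ) / α := by
  have := Measure.isProbabilityMeasure_map (μ := μ) hZm.aemeasurable
  have hF := cdf_eq_cdf_map μ hZm
  have hvaR : vaR μ Z = quantile (ProbabilityTheory.cdf (μ.map Z)) := by
    rw [← hF]; rfl
  have hc : Continuous (ProbabilityTheory.cdf (μ.map Z)) := hF ▸ hFcont
  constructor
  · change cdf μ Z (vaR μ Z α) = α
    rw [hF, hvaR, cdf_quantile_cdf _ hc hα]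
  · rw [cvar, hvaR, intervalIntegral_quantile_cdf _ hc hα, one_div, inv_mul_eq_div]
    exact congrArg (· / α)
      (setIntegral_map measurableSet_Iic aestronglyMeasurable_id hZm.aemeasurable)

/-- **CVaR is the expected value of the left tail for continuous distributions.**
Let `Z` be an integrable real-valued random variable whose cumulative distribution function
is continuous and let `α ∈ (0,1)`.  Then `P(Z ≤ VaR_α(Z)) = α` and
`CVaR_α(Z) = E[Z · 1{Z ≤ VaR_α(Z)}] / α`, i.e. `CVaR_α(Z)` is the expectation of `Z`
conditional on `Z ≤ VaR_α(Z)`. -/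
theorem cvar_eq_tail_expectation
    (μ : Measure Ω) [IsProbabilityMeasure μ]
    (Z : Ω → ℝ) (hZm : Measurable Z) (hZint : Integrable Z μ)
    (hFcont : Continuous (cdf μ Z))
    (α : ℝ) (hα : α ∈ Set.Ioo (0 : ℝ) 1) :
    (μ {ω | Z ω ≤ vaR μ Z α}).toReal = α ∧
    cvar μ Z α = (∫ ω in {ω | Z ω ≤ vaR μ Z α}, Z ω ∂μ) / α :=
  cvar_eq_tail_expectation_general μ Z hZm hFcont α hα
end
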